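/- arXiv:1701.00479 — 3 statements merged into one kernel-verified Lean document; each statement's English description precedes it below -/
import Mathlib

section
/- Let L be the CGF of NIG(α, β, 0, 1) and s̆(z) its saddle point for value z. Then the 'skewness' ratio η(z) := L'''(s̆)²/L''(s̆)³ equals 9z³/((s̆ + β)(z² + 1)) = (9z²)/(α√(1 + z²)), and the 'kurtosis' ratio ρ(z) := L⁽⁴⁾(s̆)/L''(s̆)² equals 3(5z² + 1)/(α√(1 + z²)). Consequently 3ρ(z)/η(z) − 5 = 1/z² for z ≠ 0. -/
/-!
Writing `u = β + s` and `q = √(α² − u²)`, so that `q' = −u/q`, every derivative of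
`L` beyond the first has the form `p(u)/qⁿ`, and `(p/qⁿ)' = (p'q² + n u p)/qⁿ⁺²`.
Three applications give `L'' = α²/q³`, `L''' = 3α²u/q⁵`, `L⁽⁴⁾ = 3α²(α² + 4u²)/q⁷`.
At the saddle point `u = αz/w` and `q = α/w` with `w = √(1 + z²)`, after which both
ratios are rational expressions in `z`, `w` and `α`, simplified with `w² = 1 + z²`.
-/

open Real

theorem iteratedDeriv_succ_eq_of_hasDerivAt {𝕜 F : Type*} [NontriviallyNormedField 𝕜]
    [NormedAddCommGroup F] [NormedSpace 𝕜 F] {f g : 𝕜 → F} {U : Set 𝕜} (hU : IsOpen U)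
    (hf : ∀ y ∈ U, HasDerivAt f (g y) y) {x : 𝕜} (hx : x ∈ U) (n : ℕ) :
    iteratedDeriv (n + 1) f x = iteratedDeriv n g x := by
  rw [iteratedDeriv_succ']
  exact Filter.EventuallyEq.iteratedDeriv_eq n <|
    Filter.eventuallyEq_of_mem (hU.mem_nhds hx) fun y hy => (hf y hy).deriv

section SqrtSqSub

variable {α : ℝ}

theorem hasDerivAt_sqrt_sq_sub {u : ℝ} (hu : u ^ 2 < α ^ 2) :
    HasDerivAt (fun u => √(α ^ 2 - u ^ 2)) (-u / √(α ^ 2 - u ^ 2)) u := by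
  have hpos : α ^ 2 - u ^ 2 ≠ 0 := by linarith
  convert ((hasDerivAt_pow 2 u).const_sub (α ^ 2)).sqrt hpos using 1
  field_simp
  ring

theorem hasDerivAt_div_sqrt_sq_sub_pow {P : ℝ → ℝ} {p' u : ℝ} (hP : HasDerivAt P p' u)
    (hu : u ^ 2 < α ^ 2) (n : ℕ) :
    HasDerivAt (fun u => P u / √(α ^ 2 - u ^ 2) ^ n)
      ((p' * (α ^ 2 - u ^ 2) + n * u * P u) / √(α ^ 2 - u ^ 2) ^ (n + 2)) u := by
  have hq : 0 < √(α ^ 2 - u ^ 2) := sqrt_pos.mpr (by linarith)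
  have hq2 : √(α ^ 2 - u ^ 2) ^ 2 = α ^ 2 - u ^ 2 := sq_sqrt (by linarith)
  refine (hP.div ((hasDerivAt_sqrt_sq_sub hu).pow n) (pow_ne_zero n hq.ne')).congr_deriv ?_
  simp only [Pi.pow_apply]
  set q := √(α ^ 2 - u ^ 2)
  rw [← hq2]
  rcases n with _ | n <;> field_simp <;> push_cast <;> ring

theorem iteratedDeriv_const_sub_sqrt_sq_sub (c : ℝ) {u : ℝ} (hu : u ^ 2 < α ^ 2) :
    iteratedDeriv 2 (fun u => c - √(α ^ 2 - u ^ 2)) u = α ^ 2 / √(α ^ 2 - u ^ 2) ^ 3 ∧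
    iteratedDeriv 3 (fun u => c - √(α ^ 2 - u ^ 2)) u
      = 3 * α ^ 2 * u / √(α ^ 2 - u ^ 2) ^ 5 ∧
    iteratedDeriv 4 (fun u => c - √(α ^ 2 - u ^ 2)) u
      = 3 * α ^ 2 * (α ^ 2 + 4 * u ^ 2) / √(α ^ 2 - u ^ 2) ^ 7 := by
  set U : Set ℝ := {u | u ^ 2 < α ^ 2}
  have hU : IsOpen U := isOpen_lt (continuous_pow 2) continuous_const
  have h0 : ∀ y ∈ U, HasDerivAt (fun u => c - √(α ^ 2 - u ^ 2)) (y / √(α ^ 2 - y ^ 2) ^ 1) y :=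
    fun y hy => by simpa [neg_div] using (hasDerivAt_sqrt_sq_sub hy).const_sub c
  have h1 : ∀ y ∈ U, HasDerivAt (fun u => u / √(α ^ 2 - u ^ 2) ^ 1)
      (α ^ 2 / √(α ^ 2 - y ^ 2) ^ 3) y := fun y hy => by
    convert hasDerivAt_div_sqrt_sq_sub_pow (hasDerivAt_id' y) hy 1 using 2
    push_cast; ring
  have h2 : ∀ y ∈ U, HasDerivAt (fun u => α ^ 2 / √(α ^ 2 - u ^ 2) ^ 3)
      (3 * α ^ 2 * y / √(α ^ 2 - y ^ 2) ^ 5) y := fun y hy => by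
    convert hasDerivAt_div_sqrt_sq_sub_pow (hasDerivAt_const y (α ^ 2)) hy 3 using 2
    push_cast; ring
  have h3 : ∀ y ∈ U, HasDerivAt (fun u => 3 * α ^ 2 * u / √(α ^ 2 - u ^ 2) ^ 5)
      (3 * α ^ 2 * (α ^ 2 + 4 * y ^ 2) / √(α ^ 2 - y ^ 2) ^ 7) y := fun y hy => by
    convert hasDerivAt_div_sqrt_sq_sub_pow ((hasDerivAt_id' y).const_mul (3 * α ^ 2)) hy 5
      using 2
    push_cast; ring
  refine ⟨?_, ?_, ?_⟩
  · rw [iteratedDeriv_succ_eq_of_hasDerivAt hU h0 hu, iteratedDeriv_one, (h1 u hu).deriv]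
  · rw [iteratedDeriv_succ_eq_of_hasDerivAt hU h0 hu, iteratedDeriv_succ_eq_of_hasDerivAt hU h1 hu,
      iteratedDeriv_one, (h2 u hu).deriv]
  · rw [iteratedDeriv_succ_eq_of_hasDerivAt hU h0 hu, iteratedDeriv_succ_eq_of_hasDerivAt hU h1 hu,
      iteratedDeriv_succ_eq_of_hasDerivAt hU h2 hu, iteratedDeriv_one, (h3 u hu).deriv]

end SqrtSqSub

theorem sq_sub_sq_mul_div_sqrt_one_add_sq (α z : ℝ) :
    α ^ 2 - (α * z / √(1 + z ^ 2)) ^ 2 = (α / √(1 + z ^ 2)) ^ 2 := by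
  have hw : √(1 + z ^ 2) ^ 2 = 1 + z ^ 2 := sq_sqrt (by positivity)
  have hw0 : 0 < √(1 + z ^ 2) := sqrt_pos.mpr (by positivity)
  field_simp
  linear_combination α ^ 2 * hw

theorem iteratedDeriv_const_sub_sqrt_sq_sub_saddle {α : ℝ} (hα : 0 < α) (c z : ℝ) :
    iteratedDeriv 2 (fun u => c - √(α ^ 2 - u ^ 2)) (α * z / √(1 + z ^ 2))
      = √(1 + z ^ 2) ^ 3 / α ∧
    iteratedDeriv 3 (fun u => c - √(α ^ 2 - u ^ 2)) (α * z / √(1 + z ^ 2))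
      = 3 * z * √(1 + z ^ 2) ^ 4 / α ^ 2 ∧
    iteratedDeriv 4 (fun u => c - √(α ^ 2 - u ^ 2)) (α * z / √(1 + z ^ 2))
      = 3 * (5 * z ^ 2 + 1) * √(1 + z ^ 2) ^ 5 / α ^ 3 := by
  have hw : √(1 + z ^ 2) ^ 2 = 1 + z ^ 2 := sq_sqrt (by positivity)
  have hw0 : 0 < √(1 + z ^ 2) := sqrt_pos.mpr (by positivity)
  have hsq := sq_sub_sq_mul_div_sqrt_one_add_sq α z
  have hu : (α * z / √(1 + z ^ 2)) ^ 2 < α ^ 2 := by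
    have : 0 < (α / √(1 + z ^ 2)) ^ 2 := by positivity
    linarith
  obtain ⟨h2, h3, h4⟩ := iteratedDeriv_const_sub_sqrt_sq_sub c hu
  rw [hsq, sqrt_sq (by positivity)] at h2 h3 h4
  refine ⟨?_, ?_, ?_⟩
  · rw [h2]; field_simp
  · rw [h3]; field_simp
  · rw [h4]; field_simp; linear_combination hw

theorem stmt_6_general (α β : ℝ) (hα : 0 < α) (z : ℝ) (hz : z ≠ 0) :
    let L : ℝ → ℝ := fun s => Real.sqrt (α ^ 2 - β ^ 2) - Real.sqrt (α ^ 2 - (β + s) ^ 2)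
    let s := -β + α * z / Real.sqrt (1 + z ^ 2)
    let η := (iteratedDeriv 3 L s) ^ 2 / (iteratedDeriv 2 L s) ^ 3
    let ρ := iteratedDeriv 4 L s / (iteratedDeriv 2 L s) ^ 2
    η = 9 * z ^ 3 / ((s + β) * (z ^ 2 + 1)) ∧
      η = 9 * z ^ 2 / (α * Real.sqrt (1 + z ^ 2)) ∧
      ρ = 3 * (5 * z ^ 2 + 1) / (α * Real.sqrt (1 + z ^ 2)) ∧
      3 * ρ / η - 5 = 1 / z ^ 2 := by
  intro L s η ρ
  have hw : √(1 + z ^ 2) ^ 2 = 1 + z ^ 2 := sq_sqrt (by positivity)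
  have hw0 : 0 < √(1 + z ^ 2) := sqrt_pos.mpr (by positivity)
  have hs : s + β = α * z / √(1 + z ^ 2) := by ring
  have hL (n : ℕ) : iteratedDeriv n L s
      = iteratedDeriv n (fun u => √(α ^ 2 - β ^ 2) - √(α ^ 2 - u ^ 2)) (α * z / √(1 + z ^ 2)) := by
    refine (congrFun (iteratedDeriv_comp_const_add n
      (fun u => √(α ^ 2 - β ^ 2) - √(α ^ 2 - u ^ 2)) β) s).trans ?_
    rw [add_comm, hs]
  obtain ⟨h2, h3, h4⟩ := iteratedDeriv_const_sub_sqrt_sq_sub_saddle hα (√(α ^ 2 - β ^ 2)) z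
  have hη : η = 9 * z ^ 2 / (α * √(1 + z ^ 2)) := by
    simp only [η, hL, h2, h3]
    field_simp
    norm_num
  have hρ : ρ = 3 * (5 * z ^ 2 + 1) / (α * √(1 + z ^ 2)) := by
    simp only [ρ, hL, h2, h4]
    field_simp
  refine ⟨?_, hη, hρ, ?_⟩
  · rw [hη, hs]
    field_simp
    linear_combination -hw
  · rw [hη, hρ]
    field_simp
    ring

/-- For `L` the CGF of `NIG(α, β, 0, 1)` and saddle point `s̆(z) = −β + αz/√(1+z²)`,
the skewness ratio `η = L'''(s̆)²/L''(s̆)³` equals `9z³/((s̆+β)(z²+1)) = 9z²/(α√(1+z²))`,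
the kurtosis ratio `ρ = L⁽⁴⁾(s̆)/L''(s̆)²` equals `3(5z²+1)/(α√(1+z²))`, and
`3ρ/η − 5 = 1/z²`. -/
theorem stmt_6 (α β : ℝ) (hα : 0 < α) (hβ : |β| < α) (z : ℝ) (hz : z ≠ 0) :
    let L : ℝ → ℝ := fun s => Real.sqrt (α ^ 2 - β ^ 2) - Real.sqrt (α ^ 2 - (β + s) ^ 2)
    let s := -β + α * z / Real.sqrt (1 + z ^ 2)
    let η := (iteratedDeriv 3 L s) ^ 2 / (iteratedDeriv 2 L s) ^ 3
    let ρ := iteratedDeriv 4 L s / (iteratedDeriv 2 L s) ^ 2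
    η = 9 * z ^ 3 / ((s + β) * (z ^ 2 + 1)) ∧
      η = 9 * z ^ 2 / (α * Real.sqrt (1 + z ^ 2)) ∧
      ρ = 3 * (5 * z ^ 2 + 1) / (α * Real.sqrt (1 + z ^ 2)) ∧
      3 * ρ / η - 5 = 1 / z ^ 2 :=
  stmt_6_general α β hα z hz
end

section
/- Let α > 0, |β| < α, δ = 1, μ = 0, and c ∈ ℝ with c² − 2γc ≥ 0 where γ = √(α² − β²). Then the solutions z of the equation L(s̆(z)) − z·s̆(z) = c (with s̆(z) = −β + αz/√(1 + z²) the NIG saddle point) are given by z = ((γ − c)β ± α√(c² − 2γc))/γ². -/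
/-! With `s = s̆(z)` one has `β + s = αz/√(1+z²)`, so `L(s) − z s = γ + βz − α√(1+z²)`, and the
equation becomes `α√(1+z²) = (γ − c) + βz`. Squaring gives a quadratic in `z` whose discriminant is
`α²((γ − c)² − γ²) = α²(c² − 2γc)`; completing the square yields the two stated roots. -/

open Real

lemma sqrt_sq_sub_sq_mul_div_sqrt_one_add_sq {α : ℝ} (hα : 0 ≤ α) (z : ℝ) :
    √(α ^ 2 - (α * z / √(1 + z ^ 2)) ^ 2) = α / √(1 + z ^ 2) := by
  have hw : 0 < √(1 + z ^ 2) := sqrt_pos.2 (by positivity)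
  have hw2 : √(1 + z ^ 2) ^ 2 = 1 + z ^ 2 := sq_sqrt (by positivity)
  have h : α ^ 2 - (α * z / √(1 + z ^ 2)) ^ 2 = (α / √(1 + z ^ 2)) ^ 2 := by
    field_simp
    linear_combination α ^ 2 * hw2
  rw [h, sqrt_sq (by positivity)]

lemma nig_cgf_saddle_sub_mul {α : ℝ} (hα : 0 ≤ α) (β γ z : ℝ) :
    γ - √(α ^ 2 - (β + (-β + α * z / √(1 + z ^ 2))) ^ 2) - z * (-β + α * z / √(1 + z ^ 2)) =
      γ + β * z - α * √(1 + z ^ 2) := by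
  have hw : 0 < √(1 + z ^ 2) := sqrt_pos.2 (by positivity)
  have hw2 : √(1 + z ^ 2) ^ 2 = 1 + z ^ 2 := sq_sqrt (by positivity)
  rw [add_neg_cancel_left, sqrt_sq_sub_sq_mul_div_sqrt_one_add_sq hα]
  field_simp
  linear_combination α * hw2

lemma sq_mul_sub_eq_of_mul_sqrt_eq {α β γ d z : ℝ} (hγ : γ ^ 2 = α ^ 2 - β ^ 2)
    (h : α * √(1 + z ^ 2) = d + β * z) :
    (γ ^ 2 * z - d * β) ^ 2 = α ^ 2 * (d ^ 2 - γ ^ 2) := by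
  have hsq : α ^ 2 * (1 + z ^ 2) = (d + β * z) ^ 2 := by
    rw [← h, mul_pow, sq_sqrt (by positivity)]
  linear_combination (γ ^ 2 * z ^ 2 + d ^ 2) * hγ + γ ^ 2 * hsq

lemma eq_add_div_or_eq_sub_div {a b e x : ℝ} (ha : a ≠ 0) (h : (a * x - b) ^ 2 = e ^ 2) :
    x = (b + e) / a ∨ x = (b - e) / a := by
  rcases sq_eq_sq_iff_eq_or_eq_neg.1 h with h | h
  · left; rw [eq_div_iff ha]; linarith
  · right; rw [eq_div_iff ha]; linarith

/-- For `NIG(α, β, 0, 1)` with CGF `L(s) = γ − √(α² − (β+s)²)`, `γ = √(α²−β²)`,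
and saddle point `s̆(z) = −β + αz/√(1+z²)`, if `c² − 2γc ≥ 0`, then every solution `z`
of `L(s̆(z)) − z·s̆(z) = c` is of the form `z = ((γ−c)β ± α√(c²−2γc))/γ²`. -/
theorem stmt_9 (α β c z : ℝ) (hα : 0 < α) (hβ : |β| < α) :
    let γ := Real.sqrt (α ^ 2 - β ^ 2)
    let L : ℝ → ℝ := fun s => γ - Real.sqrt (α ^ 2 - (β + s) ^ 2)
    let s := -β + α * z / Real.sqrt (1 + z ^ 2)
    0 ≤ c ^ 2 - 2 * γ * c →
    L s - z * s = c →
    z = ((γ - c) * β + α * Real.sqrt (c ^ 2 - 2 * γ * c)) / γ ^ 2 ∨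
      z = ((γ - c) * β - α * Real.sqrt (c ^ 2 - 2 * γ * c)) / γ ^ 2 := by
  intro γ L s hc heq
  have hβα : β ^ 2 < α ^ 2 := sq_lt_sq' (abs_lt.1 hβ).1 (abs_lt.1 hβ).2
  have hγ : γ ^ 2 = α ^ 2 - β ^ 2 := sq_sqrt (by linarith)
  have hγ0 : γ ^ 2 ≠ 0 := by rw [hγ]; linarith
  have hroot : α * √(1 + z ^ 2) = (γ - c) + β * z := by
    have := nig_cgf_saddle_sub_mul hα.le β γ z
    simp only [L, s] at heq
    linarith
  apply eq_add_div_or_eq_sub_div hγ0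
  rw [sq_mul_sub_eq_of_mul_sqrt_eq hγ hroot, mul_pow, sq_sqrt hc]
  ring
end

section
/- Let K(t) = λ₂((1 + θt/β)^{−α} − 1) + λ₁((1 − t/β)^{−α} − 1) with λ₁, λ₂, θ, α, β > 0. Then the saddle point equation K'(t̂) = 0 has the solution t̂ = β(1 − ζ)/(1 + θζ), where ζ = (θλ₂/λ₁)^{−1/(α+1)}. -/
/-!
On the domain where both bases are positive,
`K'(t) = (α/β) (λ₁ (1 - t/β)^{-α-1} - θλ₂ (1 + θt/β)^{-α-1})`, so `K'(t) = 0` exactly when the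
ratio `(1 - t/β)/(1 + θt/β)` raised to `-α-1` equals `θλ₂/λ₁`, i.e. when that ratio is `ζ`.
The ratio equation is linear in `t`: `1 - t/β = ζ (1 + θt/β)` means `(1 + θζ) t = β(1 - ζ)`.
-/

open Real

theorem hasDerivAt_saddlepoint_cgf {lam1 lam2 θ α β t : ℝ}
    (hA : 1 + θ * t / β ≠ 0) (hB : 1 - t / β ≠ 0) :
    HasDerivAt
      (fun t => lam2 * ((1 + θ * t / β) ^ (-α) - 1) + lam1 * ((1 - t / β) ^ (-α) - 1))
      (α / β * (lam1 * (1 - t / β) ^ (-α - 1) - θ * lam2 * (1 + θ * t / β) ^ (-α - 1))) t := by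
  have hA' : HasDerivAt (fun t => 1 + θ * t / β) (θ / β) t := by
    simpa using (((hasDerivAt_id t).const_mul θ).div_const β).const_add 1
  have hB' : HasDerivAt (fun t => 1 - t / β) (-(1 / β)) t := by
    simpa [div_eq_mul_inv] using ((hasDerivAt_id t).div_const β).const_sub 1
  refine ((((hA'.rpow_const (p := -α) (.inl hA)).sub_const 1).const_mul lam2).add
    (((hB'.rpow_const (p := -α) (.inl hB)).sub_const 1).const_mul lam1)).congr_deriv ?_
  ring

theorem one_sub_div_eq_mul_one_add_div {θ β ζ t : ℝ} (hβ : β ≠ 0)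
    (ht : (1 + θ * ζ) * t = β * (1 - ζ)) : 1 - t / β = ζ * (1 + θ * t / β) := by
  field_simp
  linear_combination -ht

theorem mul_one_add_div_eq {θ β ζ t : ℝ} (hβ : β ≠ 0)
    (ht : (1 + θ * ζ) * t = β * (1 - ζ)) : (1 + θ * ζ) * (1 + θ * t / β) = 1 + θ := by
  field_simp
  linear_combination θ * ht

theorem rpow_neg_inv_add_one_rpow {c α : ℝ} (hc : 0 ≤ c) (hα : α + 1 ≠ 0) :
    (c ^ (-(1 / (α + 1)))) ^ (-α - 1) = c := by
  rw [← rpow_mul hc, show -(1 / (α + 1)) * (-α - 1) = 1 by field_simp; ring, rpow_one]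

/-- For `K(t) = λ₂((1 + θt/β)^{−α} − 1) + λ₁((1 − t/β)^{−α} − 1)` with all parameters
positive, the saddle point equation `K'(t̂) = 0` has the solution
`t̂ = β(1 − ζ)/(1 + θζ)` where `ζ = (θλ₂/λ₁)^{−1/(α+1)}`. -/
theorem stmt_12 (lam1 lam2 θ α β : ℝ) (h1 : 0 < lam1) (h2 : 0 < lam2) (hθ : 0 < θ)
    (hα : 0 < α) (hβ : 0 < β) :
    let K : ℝ → ℝ := fun t =>
      lam2 * ((1 + θ * t / β) ^ (-α) - 1) + lam1 * ((1 - t / β) ^ (-α) - 1)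
    let ζ := (θ * lam2 / lam1) ^ (-(1 / (α + 1)))
    deriv K (β * (1 - ζ) / (1 + θ * ζ)) = 0 := by
  intro K ζ
  set t := β * (1 - ζ) / (1 + θ * ζ)
  have hc : 0 < θ * lam2 / lam1 := by positivity
  have hζ : 0 < ζ := rpow_pos_of_pos hc _
  have hden : 0 < 1 + θ * ζ := by positivity
  have ht : (1 + θ * ζ) * t = β * (1 - ζ) := mul_div_cancel₀ _ hden.ne'
  have hA : 0 < 1 + θ * t / β := by
    refine (mul_pos_iff_of_pos_left hden).1 ?_
    rw [mul_one_add_div_eq hβ.ne' ht]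
    positivity
  have hB := one_sub_div_eq_mul_one_add_div hβ.ne' ht
  have hB_pos : 0 < 1 - t / β := by
    rw [hB]
    positivity
  rw [(hasDerivAt_saddlepoint_cgf hA.ne' hB_pos.ne').deriv, hB, mul_rpow hζ.le hA.le,
    rpow_neg_inv_add_one_rpow hc.le (by positivity)]
  field_simp
  ring
end
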